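/- Let A be an n×n complex matrix and N Hermitian positive definite. If A is weighted normal with respect to N (A A^# = A^# A where A^# = N^{-1} A* N), then A commutes with its weighted Moore-Penrose inverse: A A†_{N,N} = A†_{N,N} A. -/

import Mathlib

/-!
Write `σ A = N⁻¹ Aᴴ N`. Since `N` is Hermitian and invertible, `σ` reverses products, and the
hypotheses on `X` say `A X A = A` with both `P = A X` and `Q = X A` fixed by `σ`. Normality lets
`A` and `σ A` factor through each other: `A = σ A · (A σ X)` and `σ A = A · (σ A X)`. Together
with `P A = A` and `Q σ A = σ A` this gives `Q P = P` and `P Q = Q`, whence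
`P = σ P = σ (Q P) = σ P σ Q = P Q = Q`.
-/

open Matrix Filter Topology
open scoped ComplexOrder

/-- The four equations characterizing the weighted Moore-Penrose inverse of `A`
with respect to the weights `(M, N)`. -/
def IsWMP {m n : ℕ} (M : Matrix (Fin m) (Fin m) ℂ) (N : Matrix (Fin n) (Fin n) ℂ)
    (A : Matrix (Fin m) (Fin n) ℂ) (X : Matrix (Fin n) (Fin m) ℂ) : Prop :=
  A * X * A = A ∧ X * A * X = X ∧ (M * A * X)ᴴ = M * A * X ∧ (N * X * A)ᴴ = N * X * A

theorem commute_of_normal_of_generalizedInverse {R : Type*} [Semigroup R] (σ : R → R)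
    (hσ : ∀ a b, σ (a * b) = σ b * σ a) {a x : R} (hnormal : a * σ a = σ a * a)
    (h : a * x * a = a) (hp : σ (a * x) = a * x) (hq : σ (x * a) = x * a) :
    a * x = x * a := by
  have ha : a = σ a * (a * σ x) :=
    calc a = a * (σ a * σ x) := by rw [← hσ, hq, ← mul_assoc, h]
      _ = σ a * (a * σ x) := by rw [← mul_assoc, hnormal, mul_assoc]
  have hσa : σ a = a * (σ a * x) :=
    calc σ a = σ a * (a * x) := by rw [← hp, ← hσ, h]
      _ = a * (σ a * x) := by rw [← mul_assoc, ← hnormal, mul_assoc]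
  have hqσa : x * a * σ a = σ a := by rw [← hq, ← hσ, ← mul_assoc, h]
  have hqp : x * a * (a * x) = a * x :=
    calc x * a * (a * x) = x * a * σ a * (a * σ x * x) := by
          conv_lhs => rw [show a * x = σ a * (a * σ x) * x by rw [← ha]]
          simp only [mul_assoc]
      _ = a * x := by rw [hqσa, ← mul_assoc, ← ha]
  have hpq : a * x * (x * a) = x * a :=
    calc a * x * (x * a) = a * x * a * (σ a * x * σ x) := by
          conv_lhs => rw [show x * a = a * (σ a * x) * σ x by rw [← hσa, ← hσ, hq]]
          simp only [mul_assoc]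
      _ = x * a := by rw [h, ← mul_assoc, ← hσa, ← hσ, hq]
  calc a * x = σ (x * a * (a * x)) := by rw [hqp, hp]
    _ = x * a := by rw [hσ, hp, hq, hpq]

namespace Matrix

variable {n α : Type*} [Fintype n] [DecidableEq n] [CommRing α] [StarRing α]

noncomputable def weightedConjTranspose (N A : Matrix n n α) : Matrix n n α := N⁻¹ * Aᴴ * N

theorem weightedConjTranspose_mul {N : Matrix n n α} (hN : IsUnit N.det) (A B : Matrix n n α) :
    weightedConjTranspose N (A * B) =
      weightedConjTranspose N B * weightedConjTranspose N A := by
  simp only [weightedConjTranspose, conjTranspose_mul, mul_assoc,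
    mul_nonsing_inv_cancel_left _ _ hN]

theorem weightedConjTranspose_eq_self {N B : Matrix n n α} (hN : IsUnit N.det)
    (hNh : N.IsHermitian) (h : (N * B)ᴴ = N * B) : weightedConjTranspose N B = B := by
  rw [conjTranspose_mul, hNh.eq] at h
  rw [weightedConjTranspose, mul_assoc, h, nonsing_inv_mul_cancel_left _ _ hN]

end Matrix

/-- if A is weighted normal w.r.t. N, then A commutes with A†_{N,N}. -/
theorem stmt_11 {n : ℕ} (A N : Matrix (Fin n) (Fin n) ℂ) (hN : N.PosDef)
    (hnormal : A * (N⁻¹ * Aᴴ * N) = (N⁻¹ * Aᴴ * N) * A)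
    (X : Matrix (Fin n) (Fin n) ℂ) (hX : IsWMP N N A X) :
    A * X = X * A := by
  obtain ⟨hAXA, -, hAX, hXA⟩ := hX
  have hdet : IsUnit N.det := (isUnit_iff_isUnit_det N).mp hN.isUnit
  rw [mul_assoc] at hAX hXA
  exact commute_of_normal_of_generalizedInverse (weightedConjTranspose N)
    (weightedConjTranspose_mul hdet) hnormal hAXA
    (weightedConjTranspose_eq_self hdet hN.isHermitian hAX)
    (weightedConjTranspose_eq_self hdet hN.isHermitian hXA)
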